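/- arXiv:2009.10871 — 2 statements merged into one kernel-verified Lean document; each statement's English description precedes it below -/
import Mathlib

section
/- If |d| > 2, then f_i(d) ≠ 0 for all i ≥ 1. -/
noncomputable def f (d : ℝ) : ℕ → ℝ
  | 0 => 0
  | 1 => 1
  | (i + 2) => -d * f d (i + 1) - f d i

lemma f_grow (d : ℝ) (hd : |d| > 2) : ∀ i : ℕ, |f d i| < |f d (i + 1)| := by
  intro i
  induction i using Nat.strong_induction_on with
  | _ i ih =>
    match i with
    | 0 => simp [f]
    | (n + 1) =>
      have h := ih n (by omega)
      have h0 : (0:ℝ) ≤ |f d (n+1)| := abs_nonneg _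
      have hpos : 0 < |f d (n+1)| := lt_of_le_of_lt (abs_nonneg _) h
      have key : |f d (n+2)| ≥ |d| * |f d (n+1)| - |f d n| := by
        have : f d (n+2) = -d * f d (n+1) - f d n := rfl
        rw [this]
        calc |(-d) * f d (n+1) - f d n| ≥ |(-d) * f d (n+1)| - |f d n| :=
              abs_sub_abs_le_abs_sub _ _
          _ = |d| * |f d (n+1)| - |f d n| := by rw [abs_mul, abs_neg]
      have : |d| * |f d (n+1)| - |f d n| > |f d (n+1)| := by nlinarith
      linarith

theorem stmt_1 (d : ℝ) (hd : |d| > 2) : ∀ i : ℕ, 1 ≤ i → f d i ≠ 0 := by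
  have key : ∀ i : ℕ, 1 ≤ i → 1 ≤ |f d i| := by
    intro i hi
    induction i with
    | zero => omega
    | succ n ih =>
      rcases Nat.eq_or_lt_of_le hi with h | h
      · norm_num [show n = 0 by omega, f]
      · have := ih (by omega)
        have := f_grow d hd n
        linarith
  intro i hi h
  have := key i hi
  rw [h] at this
  norm_num at this
end

section
/- Assume |d| > 2. For every n ≥ 1, the sum ∑_{j=1}^{n−1} 1/(f_j(d)·f_{j+1}(d)) equals f_{n−1}(d)/f_n(d). -/
/-!
Cassini's identity `f (n+1)^2 - f n * f (n+2) = 1` says that consecutive quotients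
`f n / f (n+1)` differ by exactly `1 / (f (n+1) * f (n+2))`, so the sum telescopes.
For `|d| ≥ 2` the gaps `|f (n+1)| - |f n|` never decrease, hence `|f n| ≥ n` and no
denominator vanishes.
-/

lemma f_add_two (d : ℝ) (n : ℕ) : f d (n + 2) = -d * f d (n + 1) - f d n := rfl

lemma f_cassini (d : ℝ) (n : ℕ) : f d (n + 1) ^ 2 - f d n * f d (n + 2) = 1 := by
  induction n with
  | zero => simp [f]
  | succ n ih =>
    rw [f_add_two d (n + 1)]
    linear_combination ih + f d (n + 2) * f_add_two d n

lemma le_abs_f_and_abs_f_add_one_le {d : ℝ} (hd : 2 ≤ |d|) (n : ℕ) :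
    (n : ℝ) ≤ |f d n| ∧ |f d n| + 1 ≤ |f d (n + 1)| := by
  induction n with
  | zero => simp [f]
  | succ n ih =>
    obtain ⟨hn, hgap⟩ := ih
    refine ⟨by push_cast; linarith, ?_⟩
    have hrev : |-d * f d (n + 1)| - |f d n| ≤ |f d (n + 2)| :=
      abs_sub_abs_le_abs_sub _ _
    rw [abs_mul, abs_neg] at hrev
    nlinarith [abs_nonneg (f d (n + 1))]

lemma f_ne_zero {d : ℝ} (hd : 2 ≤ |d|) {n : ℕ} (hn : n ≠ 0) : f d n ≠ 0 := by
  have hle := (le_abs_f_and_abs_f_add_one_le hd n).1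
  have hpos : (0 : ℝ) < n := by exact_mod_cast Nat.pos_of_ne_zero hn
  exact abs_pos.mp (hpos.trans_le hle)

lemma f_div_add_one_div_mul {d : ℝ} (hd : 2 ≤ |d|) (n : ℕ) :
    f d n / f d (n + 1) + 1 / (f d (n + 1) * f d (n + 2)) = f d (n + 1) / f d (n + 2) := by
  have h₁ := f_ne_zero hd n.succ_ne_zero
  have h₂ := f_ne_zero hd (n + 1).succ_ne_zero
  field_simp
  linear_combination -f_cassini d n

lemma sum_Icc_one_div_f_mul_f {d : ℝ} (hd : 2 ≤ |d|) (m : ℕ) :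
    ∑ j ∈ Finset.Icc 1 m, 1 / (f d j * f d (j + 1)) = f d m / f d (m + 1) := by
  induction m with
  | zero => simp [f]
  | succ m ih =>
    rw [Finset.sum_Icc_succ_top (by omega), ih, f_div_add_one_div_mul hd]

theorem stmt_5 (d : ℝ) (hd : |d| > 2) : ∀ n : ℕ, 1 ≤ n →
    ∑ j ∈ Finset.Icc 1 (n - 1), 1 / (f d j * f d (j + 1)) =
      f d (n - 1) / f d n := by
  intro n hn
  obtain ⟨m, rfl⟩ : ∃ m, n = m + 1 := ⟨n - 1, by omega⟩
  simpa using sum_Icc_one_div_f_mul_f hd.le m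
end
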